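/- arXiv:1610.07384 — 6 statements merged into one kernel-verified Lean document; each statement's English description precedes it below -/
import Mathlib

section
/- For each criticality level ℓ ∈ {1,…,L}, the quantity Σ_{i: X_i ≥ ℓ} p_i^(ℓ) is a lower bound on the makespan of any feasible schedule of a set of F-shaped tasks. -/
/-- Feasibility of a schedule of F-shaped tasks. -/
def Feasible {ι : Type*} (X : ι → ℕ) (p : ι → ℕ → ℕ) (s : ι → ℕ) : Prop :=
  ∀ i j, i ≠ j →
    s i + p i (min (X i) (X j)) ≤ s j ∨ s j + p j (min (X i) (X j)) ≤ s i

/-- Makespan of a schedule. -/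
def makespan {ι : Type*} [Fintype ι] (X : ι → ℕ) (p : ι → ℕ → ℕ) (s : ι → ℕ) : ℕ :=
  Finset.univ.sup fun i => s i + p i (X i)

/-- A valid set of F-shaped tasks with criticalities in {1,…,L} and strictly
increasing processing times on levels 1..X i. -/
def ValidInstance {ι : Type*} (L : ℕ) (X : ι → ℕ) (p : ι → ℕ → ℕ) : Prop :=
  ∀ i, 1 ≤ X i ∧ X i ≤ L ∧ StrictMonoOn (p i) (Set.Icc 1 (X i))

/-!
Fix a level `ℓ`. For two tasks of criticality at least `ℓ`, the feasibility constraint is imposed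
at level `min (X i) (X j) ≥ ℓ`, and processing times increase with the level, so the intervals
`[s i, s i + p i ℓ)` of the tasks of criticality at least `ℓ` are pairwise disjoint. Disjoint
intervals of `ℕ` inside `[0, M)`, with `M` their largest right end, have total length at most
`M`, and each of them ends before the makespan because `p i ℓ ≤ p i (X i)`.
-/

open Finset

theorem sum_le_sup_add_of_nonoverlapping {ι : Type*} (S : Finset ι) (s d : ι → ℕ)
    (h : ∀ i ∈ S, ∀ j ∈ S, i ≠ j → s i + d i ≤ s j ∨ s j + d j ≤ s i) :
    ∑ i ∈ S, d i ≤ S.sup fun i => s i + d i := by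
  have hdisj : (S : Set ι).PairwiseDisjoint fun i => Ico (s i) (s i + d i) := by
    intro i hi j hj hij
    refine disjoint_left.2 fun x hxi hxj => ?_
    rw [mem_Ico] at hxi hxj
    rcases h i hi j hj hij with h | h <;> omega
  have hsub : (S.biUnion fun i => Ico (s i) (s i + d i)) ⊆ range (S.sup fun i => s i + d i) :=
    biUnion_subset.2 fun i hi => by
      rw [range_eq_Ico]
      exact Ico_subset_Ico (Nat.zero_le _) (le_sup (f := fun i => s i + d i) hi)
  calc ∑ i ∈ S, d i = ∑ i ∈ S, #(Ico (s i) (s i + d i)) := by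
        simp only [Nat.card_Ico, Nat.add_sub_cancel_left]
    _ = #(S.biUnion fun i => Ico (s i) (s i + d i)) := (card_biUnion hdisj).symm
    _ ≤ S.sup (fun i => s i + d i) := by simpa using card_le_card hsub

theorem ValidInstance.monotoneOn {ι : Type*} {L : ℕ} {X : ι → ℕ} {p : ι → ℕ → ℕ}
    (hI : ValidInstance L X p) (i : ι) : MonotoneOn (p i) (Set.Icc 1 (X i)) :=
  (hI i).2.2.monotoneOn

theorem Feasible.nonoverlapping_at_level {ι : Type*} {X : ι → ℕ} {p : ι → ℕ → ℕ} {s : ι → ℕ}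
    (hs : Feasible X p s) (hmono : ∀ i, MonotoneOn (p i) (Set.Icc 1 (X i)))
    {ℓ : ℕ} (hℓ : 1 ≤ ℓ) {i j : ι} (hi : ℓ ≤ X i) (hj : ℓ ≤ X j) (hij : i ≠ j) :
    s i + p i ℓ ≤ s j ∨ s j + p j ℓ ≤ s i := by
  have hℓm : ℓ ≤ min (X i) (X j) := le_min hi hj
  have hpi : p i ℓ ≤ p i (min (X i) (X j)) :=
    hmono i ⟨hℓ, hi⟩ ⟨hℓ.trans hℓm, min_le_left _ _⟩ hℓm
  have hpj : p j ℓ ≤ p j (min (X i) (X j)) :=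
    hmono j ⟨hℓ, hj⟩ ⟨hℓ.trans hℓm, min_le_right _ _⟩ hℓm
  rcases hs i j hij with h | h
  · exact Or.inl (by omega)
  · exact Or.inr (by omega)

theorem add_le_makespan {ι : Type*} [Fintype ι] {X : ι → ℕ} {p : ι → ℕ → ℕ} (s : ι → ℕ)
    (hmono : ∀ i, MonotoneOn (p i) (Set.Icc 1 (X i))) {ℓ : ℕ} (hℓ : 1 ≤ ℓ) {i : ι}
    (hi : ℓ ≤ X i) : s i + p i ℓ ≤ makespan X p s :=
  calc s i + p i ℓ ≤ s i + p i (X i) :=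
        Nat.add_le_add_left (hmono i ⟨hℓ, hi⟩ ⟨hℓ.trans hi, le_rfl⟩ hi) _
    _ ≤ makespan X p s := le_sup (f := fun j => s j + p j (X j)) (mem_univ i)

/-- each level-wise sum Σ_{i : X_i ≥ ℓ} p_i^(ℓ) lower-bounds the
makespan of every feasible schedule. -/
theorem stmt1 (n L : ℕ) (X : Fin n → ℕ) (p : Fin n → ℕ → ℕ)
    (hI : ValidInstance L X p) (s : Fin n → ℕ) (hs : Feasible X p s)
    (ℓ : ℕ) (hℓ : ℓ ∈ Finset.Icc 1 L) :
    ∑ i ∈ Finset.univ.filter fun i => ℓ ≤ X i, p i ℓ ≤ makespan X p s := by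
  have hℓ1 : 1 ≤ ℓ := (mem_Icc.mp hℓ).1
  set S := univ.filter fun i => ℓ ≤ X i
  have hS : ∀ i ∈ S, ℓ ≤ X i := fun i hi => (mem_filter.mp hi).2
  calc ∑ i ∈ S, p i ℓ ≤ S.sup fun i => s i + p i ℓ :=
        sum_le_sup_add_of_nonoverlapping S s (fun i => p i ℓ) fun i hi j hj =>
          hs.nonoverlapping_at_level hI.monotoneOn hℓ1 (hS i hi) (hS j hj)
    _ ≤ makespan X p s :=
        Finset.sup_le fun i hi => add_le_makespan s hI.monotoneOn hℓ1 (hS i hi)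
end

section
/- The LCF schedule (ordering tasks non-decreasingly by criticality, left-shifted) is feasible and its makespan satisfies LCF(I) ≤ L · OPT(I), where OPT(I) is the minimum makespan over all feasible schedules and L is the maximum criticality. Hence the non-preemptive mixed-criticality scheduling problem with L criticality levels is approximable within factor L. -/
/-- The LCF (left-shifted, criticality-ordered) schedule induced by a
permutation σ: task i starts at the sum of top-level processing times of all
tasks preceding it in the order σ. -/
def lcfSchedule {n : ℕ} (X : Fin n → ℕ) (p : Fin n → ℕ → ℕ)
    (σ : Equiv.Perm (Fin n)) (i : Fin n) : ℕ :=
  ∑ j ∈ Finset.univ.filter fun j => σ.symm j < σ.symm i, p j (X j)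

lemma lcf_key {n L : ℕ} (X : Fin n → ℕ) (p : Fin n → ℕ → ℕ)
    (hI : ValidInstance L X p) (σ : Equiv.Perm (Fin n)) {i j : Fin n}
    (h : σ.symm i < σ.symm j) :
    lcfSchedule X p σ i + p i (min (X i) (X j)) ≤ lcfSchedule X p σ j := by
  have hi : i ∉ Finset.univ.filter fun k => σ.symm k < σ.symm i := by
    simp
  have hmin : p i (min (X i) (X j)) ≤ p i (X i) := by
    refine (hI i).2.2.monotoneOn ?_ ?_ (min_le_left _ _)
    · exact ⟨le_min (hI i).1 (hI j).1, min_le_left _ _⟩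
    · exact ⟨(hI i).1, le_rfl⟩
  have hsub : insert i (Finset.univ.filter fun k => σ.symm k < σ.symm i)
      ⊆ Finset.univ.filter fun k => σ.symm k < σ.symm j := by
    intro k hk
    simp only [Finset.mem_insert, Finset.mem_filter, Finset.mem_univ, true_and] at *
    rcases hk with rfl | hk
    · exact h
    · exact hk.trans h
  calc lcfSchedule X p σ i + p i (min (X i) (X j))
      ≤ lcfSchedule X p σ i + p i (X i) := by omega
    _ = ∑ k ∈ insert i (Finset.univ.filter fun k => σ.symm k < σ.symm i), p k (X k) := by
        rw [Finset.sum_insert hi, lcfSchedule]; omega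
    _ ≤ lcfSchedule X p σ j := Finset.sum_le_sum_of_subset hsub

/-- the LCF schedule is feasible and its makespan is at most
L times the optimal makespan. -/
theorem stmt2 (n L : ℕ) (X : Fin n → ℕ) (p : Fin n → ℕ → ℕ)
    (hI : ValidInstance L X p) (σ : Equiv.Perm (Fin n))
    (hσ : Monotone fun k => X (σ k)) :
    Feasible X p (lcfSchedule X p σ) ∧
      ∀ s', Feasible X p s' →
        makespan X p (lcfSchedule X p σ) ≤ L * makespan X p s' := by
  constructor
  · intro i j hij
    have hne : σ.symm i ≠ σ.symm j := fun h => hij (σ.symm.injective h)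
    rcases hne.lt_or_gt with h | h
    · exact Or.inl (lcf_key X p hI σ h)
    · right
      rw [min_comm]
      exact lcf_key X p hI σ h
  · intro s' hs'
    have hsum : makespan X p (lcfSchedule X p σ) ≤ ∑ j, p j (X j) := by
      apply Finset.sup_le
      intro i _
      have hi : i ∉ Finset.univ.filter fun k => σ.symm k < σ.symm i := by simp
      calc lcfSchedule X p σ i + p i (X i)
          = ∑ k ∈ insert i (Finset.univ.filter fun k => σ.symm k < σ.symm i), p k (X k) := by
            rw [Finset.sum_insert hi, lcfSchedule]; omega
        _ ≤ ∑ j, p j (X j) :=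
            Finset.sum_le_sum_of_subset (Finset.subset_univ _)
    have hlev : ∀ ℓ : ℕ,
        (∑ i ∈ Finset.univ.filter fun i => X i = ℓ, p i (X i)) ≤ makespan X p s' := by
      intro ℓ
      set T := Finset.univ.filter fun i : Fin n => X i = ℓ with hT
      have hdisj : ∀ i ∈ T, ∀ j ∈ T, i ≠ j →
          Disjoint (Finset.Ico (s' i) (s' i + p i (X i)))
            (Finset.Ico (s' j) (s' j + p j (X j))) := by
        intro i hi j hj hij
        simp only [hT, Finset.mem_filter, Finset.mem_univ, true_and] at hi hj
        have hm : min (X i) (X j) = X i := by rw [hi, hj]; simp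
        have := hs' i j hij
        rw [hm, hi] at this
        rw [Finset.disjoint_left]
        intro a ha hb
        simp only [Finset.mem_Ico] at ha hb
        rw [hi, hj] at *
        omega
      have hcard : ∀ i ∈ T, (Finset.Ico (s' i) (s' i + p i (X i))).card = p i (X i) := by
        intro i _
        rw [Nat.card_Ico]; omega
      have hsub : T.biUnion (fun i => Finset.Ico (s' i) (s' i + p i (X i)))
          ⊆ Finset.range (makespan X p s') := by
        intro a ha
        simp only [Finset.mem_biUnion, Finset.mem_Ico] at ha
        obtain ⟨i, _, hi1, hi2⟩ := ha
        have : s' i + p i (X i) ≤ makespan X p s' :=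
          Finset.le_sup (f := fun k => s' k + p k (X k)) (Finset.mem_univ i)
        simp only [Finset.mem_range]
        omega
      calc (∑ i ∈ T, p i (X i))
          = ∑ i ∈ T, (Finset.Ico (s' i) (s' i + p i (X i))).card :=
            (Finset.sum_congr rfl hcard).symm
        _ = (T.biUnion fun i => Finset.Ico (s' i) (s' i + p i (X i))).card :=
            (Finset.card_biUnion hdisj).symm
        _ ≤ (Finset.range (makespan X p s')).card := Finset.card_le_card hsub
        _ = makespan X p s' := Finset.card_range _
    have hfiber : (∑ j, p j (X j)) =
        ∑ ℓ ∈ Finset.Icc 1 L, ∑ i ∈ Finset.univ.filter fun i => X i = ℓ, p i (X i) := by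
      exact (Finset.sum_fiberwise_of_maps_to
        (fun i _ => Finset.mem_Icc.mpr ⟨(hI i).1, (hI i).2.1⟩) _).symm
    calc makespan X p (lcfSchedule X p σ) ≤ ∑ j, p j (X j) := hsum
      _ = _ := hfiber
      _ ≤ ∑ _ℓ ∈ Finset.Icc 1 L, makespan X p s' :=
          Finset.sum_le_sum fun ℓ _ => hlev ℓ
      _ = L * makespan X p s' := by
          rw [Finset.sum_const, Nat.card_Icc]
          simp [Nat.mul_comm]
end

section
/- With L = 2 criticality levels, the maximum of the two level-wise sums, max( Σ_{all i} p_i^(1), Σ_{i: X_i=2} p_i^(2) ), is a lower bound on the optimal makespan, and LCF(I) ≤ 2 · OPT(I). Moreover, every left-shifted feasible schedule has makespan at most 2 · OPT(I). -/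
/-- A schedule is left-shifted if no single start time can be decreased (keeping
all other start times fixed) while preserving feasibility. -/
def LeftShifted {ι : Type*} [DecidableEq ι] (X : ι → ℕ) (p : ι → ℕ → ℕ)
    (s : ι → ℕ) : Prop :=
  Feasible X p s ∧ ∀ i t, t < s i → ¬ Feasible X p (Function.update s i t)

lemma disjoint_sum_le {n : ℕ} (s : Fin n → ℕ) (F : Finset (Fin n)) (len : Fin n → ℕ) (M : ℕ)
    (hM : ∀ i ∈ F, s i + len i ≤ M)
    (hd : ∀ i ∈ F, ∀ j ∈ F, i ≠ j → s i + len i ≤ s j ∨ s j + len j ≤ s i) :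
    ∑ i ∈ F, len i ≤ M := by
  classical
  have hdisj : ∀ i ∈ F, ∀ j ∈ F, i ≠ j →
      Disjoint (Finset.Ico (s i) (s i + len i)) (Finset.Ico (s j) (s j + len j)) := by
    intro i hi j hj hij
    simp only [Finset.disjoint_left, Finset.mem_Ico]
    rintro x ⟨h1, h2⟩ ⟨h3, h4⟩
    rcases hd i hi j hj hij with h | h <;> omega
  have hsub : F.biUnion (fun i => Finset.Ico (s i) (s i + len i)) ⊆ Finset.range M := by
    intro x hx
    simp only [Finset.mem_biUnion, Finset.mem_Ico] at hx
    obtain ⟨i, hi, h1, h2⟩ := hx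
    exact Finset.mem_range.2 (lt_of_lt_of_le h2 (hM i hi))
  have hcard := Finset.card_le_card hsub
  rw [Finset.card_biUnion hdisj] at hcard
  calc ∑ i ∈ F, len i = ∑ i ∈ F, (Finset.Ico (s i) (s i + len i)).card := by
        refine Finset.sum_congr rfl fun i _ => ?_
        rw [Nat.card_Ico]; omega
    _ ≤ M := by simpa using hcard

/-- with two criticality levels, max of level-wise sums is a lower
bound, LCF(I) ≤ 2·OPT(I), and every left-shifted feasible schedule has makespan
at most 2·OPT(I). -/
theorem stmt3 (n : ℕ) (X : Fin n → ℕ) (p : Fin n → ℕ → ℕ)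
    (hI : ValidInstance 2 X p) :
    (∀ s, Feasible X p s →
      max (∑ i, p i 1) (∑ i ∈ Finset.univ.filter fun i => X i = 2, p i 2) ≤
        makespan X p s) ∧
    (∀ s, Feasible X p s →
      (∑ i ∈ Finset.univ.filter fun i => X i = 1, p i 1) +
        (∑ i ∈ Finset.univ.filter fun i => X i = 2, p i 2) ≤
          2 * makespan X p s) ∧
    (∀ s, LeftShifted X p s → ∀ s', Feasible X p s' →
      makespan X p s ≤ 2 * makespan X p s') := by
  classical
  -- monotonicity of p i on [1, X i]
  have pmono : ∀ i (a b : ℕ), 1 ≤ a → a ≤ b → b ≤ X i → p i a ≤ p i b := by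
    intro i a b h1 h2 h3
    exact (hI i).2.2.monotoneOn ⟨h1, le_trans h2 h3⟩ ⟨le_trans h1 h2, h3⟩ h2
  have hX1 : ∀ i, 1 ≤ X i := fun i => (hI i).1
  have hX2 : ∀ i, X i ≤ 2 := fun i => (hI i).2.1
  have hmin1 : ∀ i j, 1 ≤ min (X i) (X j) := fun i j => le_min (hX1 i) (hX1 j)
  have hminle : ∀ i j, min (X i) (X j) ≤ X i := fun i j => min_le_left _ _
  -- p i 1 ≤ p i (min (X i) (X j)) ≤ p i (X i)
  have hp1min : ∀ i j, p i 1 ≤ p i (min (X i) (X j)) := by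
    intro i j; exact pmono i 1 _ le_rfl (hmin1 i j) (hminle i j)
  have hpminX : ∀ i j, p i (min (X i) (X j)) ≤ p i (X i) := by
    intro i j; exact pmono i _ (X i) (hmin1 i j) (hminle i j) le_rfl
  have hp1X : ∀ i, p i 1 ≤ p i (X i) := fun i => pmono i 1 (X i) le_rfl (hX1 i) le_rfl
  -- lower bound part
  have part1 : ∀ s, Feasible X p s →
      max (∑ i, p i 1) (∑ i ∈ Finset.univ.filter fun i => X i = 2, p i 2) ≤
        makespan X p s := by
    intro s hs
    refine max_le ?_ ?_
    · refine disjoint_sum_le s Finset.univ (fun i => p i 1) _ ?_ ?_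
      · intro i _
        show s i + p i 1 ≤ makespan X p s
        calc s i + p i 1 ≤ s i + p i (X i) := by have := hp1X i; omega
          _ ≤ makespan X p s := by
              simp only [makespan]; exact Finset.le_sup (f := fun j => s j + p j (X j)) (Finset.mem_univ i)
      · intro i _ j _ hij
        show s i + p i 1 ≤ s j ∨ s j + p j 1 ≤ s i
        rcases hs i j hij with h | h
        · left; have := hp1min i j; omega
        · right; have := hp1min j i; rw [min_comm] at this; omega
    · refine disjoint_sum_le s _ (fun i => p i 2) _ ?_ ?_
      · intro i hi
        rw [Finset.mem_filter] at hi
        show s i + p i 2 ≤ makespan X p s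
        calc s i + p i 2 = s i + p i (X i) := by rw [hi.2]
          _ ≤ makespan X p s := by
              simp only [makespan]; exact Finset.le_sup (f := fun j => s j + p j (X j)) (Finset.mem_univ i)
      · intro i hi j hj hij
        rw [Finset.mem_filter] at hi hj
        show s i + p i 2 ≤ s j ∨ s j + p j 2 ≤ s i
        have hm : min (X i) (X j) = 2 := by have := hi.2; have := hj.2; omega
        rcases hs i j hij with h | h
        · left; rw [hm] at h; omega
        · right; rw [hm] at h; omega
  have part2 : ∀ s, Feasible X p s →
      (∑ i ∈ Finset.univ.filter fun i => X i = 1, p i 1) +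
        (∑ i ∈ Finset.univ.filter fun i => X i = 2, p i 2) ≤
          2 * makespan X p s := by
    intro s hs
    have h1 : (∑ i ∈ Finset.univ.filter fun i => X i = 1, p i 1) ≤ ∑ i, p i 1 :=
      Finset.sum_le_sum_of_subset (Finset.filter_subset _ _)
    have h := part1 s hs
    have ha := le_trans (le_max_left _ _) h
    have hb := le_trans (le_max_right _ _) h
    omega
  refine ⟨part1, part2, ?_⟩
  intro s hLS s' hs'
  obtain ⟨hfeas, hmin⟩ := hLS
  -- predecessor structure
  set μ : Fin n → ℕ := fun i => 2 * s i + (if p i 1 = 0 then 0 else 1) with hμ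
  have pred : ∀ i, s i ≠ 0 → ∃ j, j ≠ i ∧
      s j + p j (min (X i) (X j)) = s i ∧ μ j < μ i ∧
      p j (min (X i) (X j)) ≤ p j (X j) := by
    intro i hi0
    have ht : s i - 1 < s i := by omega
    have hnf := hmin i (s i - 1) ht
    rw [Feasible] at hnf
    push_neg at hnf
    obtain ⟨a, b, hab, h1, h2⟩ := hnf
    -- the violating pair must involve i
    have hib : a = i ∨ b = i := by
      by_contra hc
      push_neg at hc
      rw [Function.update_of_ne hc.1, Function.update_of_ne hc.2] at h1 h2
      rcases hfeas a b hab with h | h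
      · exact absurd h (by omega)
      · exact absurd h (by omega)
    -- normalize: get j ≠ i with the two strict inequalities
    obtain ⟨j, hji, hA, hB⟩ :
        ∃ j, j ≠ i ∧ s i - 1 + p i (min (X i) (X j)) > s j ∧
          s j + p j (min (X i) (X j)) > s i - 1 := by
      rcases hib with rfl | rfl
      · refine ⟨b, hab.symm, ?_, ?_⟩
        · rw [Function.update_self, Function.update_of_ne hab.symm] at h1; omega
        · rw [Function.update_self, Function.update_of_ne hab.symm] at h2; omega
      · refine ⟨a, hab, ?_, ?_⟩
        · rw [Function.update_self, Function.update_of_ne hab] at h2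
          rw [min_comm] at h2; omega
        · rw [Function.update_self, Function.update_of_ne hab] at h1
          rw [min_comm] at h1; omega
    have heq : s j + p j (min (X i) (X j)) = s i := by
      rcases hfeas i j (Ne.symm hji) with h | h <;> omega
    have hple : p j (min (X i) (X j)) ≤ p j (X j) := by
      rw [min_comm]; exact hpminX j i
    have hμlt : μ j < μ i := by
      by_cases hss : s j < s i
      · simp only [hμ]; split_ifs <;> omega
      · have hsj : s j = s i := by omega
        have hpj0 : p j (min (X i) (X j)) = 0 := by omega
        have hpi2 : 2 ≤ p i (min (X i) (X j)) := by omega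
        have hm1 : min (X i) (X j) = 1 := by
          by_contra hm2'
          have hmin2 : min (X i) (X j) = 2 := by
            have h1 := hmin1 i j
            have h2 := min_le_right (X i) (X j)
            have := hX2 j
            omega
          have hXj : X j = 2 := by
            have := min_le_right (X i) (X j); have := hX2 j; omega
          have hlt : p j 1 < p j 2 :=
            (hI j).2.2 ⟨le_rfl, hX1 j⟩ ⟨by omega, by omega⟩ (by omega)
          rw [hmin2] at hpj0
          omega
        have hpj1 : p j 1 = 0 := by rw [hm1] at hpj0; exact hpj0
        have hpi1 : 2 ≤ p i 1 := by rw [hm1] at hpi2; exact hpi2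
        simp only [hμ]
        split_ifs <;> omega
    exact ⟨j, hji, heq, hμlt, hple⟩
  -- strong induction on the measure
  have key : ∀ k i, μ i ≤ k →
      s i ≤ ∑ j ∈ Finset.univ.filter (fun j => μ j < μ i), p j (X j) := by
    intro k
    induction k with
    | zero =>
      intro i h
      have : s i = 0 := by simp only [hμ] at h; omega
      omega
    | succ k ih =>
      intro i h
      by_cases h0 : s i = 0
      · omega
      obtain ⟨j, hji, heq, hμlt, hple⟩ := pred i h0
      have hjk : μ j ≤ k := by omega
      have hsj := ih j hjk
      have hsub : insert j (Finset.univ.filter (fun l => μ l < μ j)) ⊆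
          Finset.univ.filter (fun l => μ l < μ i) := by
        intro l hl
        rw [Finset.mem_insert] at hl
        rcases hl with rfl | hl
        · simp only [Finset.mem_filter]; exact ⟨Finset.mem_univ _, hμlt⟩
        · rw [Finset.mem_filter] at hl ⊢; exact ⟨hl.1, by omega⟩
      have hjnot : j ∉ Finset.univ.filter (fun l => μ l < μ j) := by
        simp [Finset.mem_filter]
      calc s i = s j + p j (min (X i) (X j)) := heq.symm
        _ ≤ s j + p j (X j) := by omega
        _ ≤ (∑ l ∈ Finset.univ.filter (fun l => μ l < μ j), p l (X l)) + p j (X j) := by omega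
        _ = ∑ l ∈ insert j (Finset.univ.filter (fun l => μ l < μ j)), p l (X l) := by
            rw [Finset.sum_insert hjnot]; omega
        _ ≤ ∑ j ∈ Finset.univ.filter (fun j => μ j < μ i), p j (X j) :=
            Finset.sum_le_sum_of_subset hsub
  -- makespan of left-shifted schedule is at most total work
  have hms : makespan X p s ≤ ∑ j, p j (X j) := by
    rw [makespan]
    refine Finset.sup_le fun i _ => ?_
    have hk := key (μ i) i le_rfl
    have hsub : insert i (Finset.univ.filter (fun l => μ l < μ i)) ⊆ Finset.univ := by
      intro l _; exact Finset.mem_univ l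
    have hinot : i ∉ Finset.univ.filter (fun l => μ l < μ i) := by
      simp [Finset.mem_filter]
    calc s i + p i (X i)
        ≤ (∑ l ∈ Finset.univ.filter (fun l => μ l < μ i), p l (X l)) + p i (X i) := by omega
      _ = ∑ l ∈ insert i (Finset.univ.filter (fun l => μ l < μ i)), p l (X l) := by
          rw [Finset.sum_insert hinot]; omega
      _ ≤ ∑ j, p j (X j) := Finset.sum_le_sum_of_subset hsub
  -- total work splits by criticality level
  have hsplit : ∑ j, p j (X j) =
      (∑ i ∈ Finset.univ.filter fun i => X i = 1, p i 1) +
        (∑ i ∈ Finset.univ.filter fun i => X i = 2, p i 2) := by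
    rw [← Finset.sum_filter_add_sum_filter_not Finset.univ (fun i => X i = 1) (fun j => p j (X j))]
    congr 1
    · exact Finset.sum_congr rfl fun i hi => by rw [Finset.mem_filter] at hi; rw [hi.2]
    · refine Finset.sum_congr ?_ fun i hi => ?_
      · ext i
        simp only [Finset.mem_filter, Finset.mem_univ, true_and]
        have := hX1 i; have := hX2 i; omega
      · rw [Finset.mem_filter] at hi; rw [hi.2]
  calc makespan X p s ≤ ∑ j, p j (X j) := hms
    _ = _ := hsplit
    _ ≤ 2 * makespan X p s' := part2 s' hs'
end

section
/- For every instance of the two-level problem (1|mc=2,mu|C_max), there exists an optimal feasible schedule obtained by concatenating covering blocks (in an arbitrary order): i.e., the minimum makespan equals the minimum over all assignments of Lo-tasks to Hi-tasks of Σ_i max(p_i^(1) + Σ_{j↦i} p_j^(1), p_i^(2)) + Σ_{unassigned j} p_j^(1). -/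
/-- A valid assignment maps each Lo-task to at most one Hi-task. -/
def ValidAssignment {n : ℕ} (X : Fin n → ℕ) (a : Fin n → Option (Fin n)) : Prop :=
  ∀ j i, a j = some i → X j = 1 ∧ X i = 2

/-- Length of the covering block of Hi-task i under assignment a. -/
def blockLen {n : ℕ} (X : Fin n → ℕ) (p : Fin n → ℕ → ℕ)
    (a : Fin n → Option (Fin n)) (i : Fin n) : ℕ :=
  max (p i 1 + ∑ j ∈ Finset.univ.filter fun j => X j = 1 ∧ a j = some i, p j 1)
    (p i 2)

/-- Objective value of the covering formulation for assignment a. -/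
def coverObj {n : ℕ} (X : Fin n → ℕ) (p : Fin n → ℕ → ℕ)
    (a : Fin n → Option (Fin n)) : ℕ :=
  (∑ i ∈ Finset.univ.filter fun i => X i = 2, blockLen X p a i) +
    ∑ j ∈ Finset.univ.filter fun j => X j = 1 ∧ a j = none, p j 1

open Finset

section General

variable {ι : Type*}

lemma Finset.disjoint_Ico_of_le_or_le {a b c d : ℕ} (h : b ≤ c ∨ d ≤ a) :
    Disjoint (Ico a b) (Ico c d) := by
  rw [disjoint_left]
  intro x hx hx'
  rw [mem_Ico] at hx hx'
  omega

lemma sum_filter_lt_add_le [LinearOrder ι] (S : Finset ι) (f : ι → ℕ) {m : ι} (hm : m ∈ S) :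
    ∑ t ∈ S with t < m, f t + f m ≤ ∑ t ∈ S, f t := by
  rw [add_comm, ← sum_insert (by simp)]
  exact sum_le_sum_of_subset (insert_subset hm (filter_subset _ _))

lemma sum_filter_lt_add_le_sum_filter_lt [LinearOrder ι] (S : Finset ι) (f : ι → ℕ) {m m' : ι}
    (hm : m ∈ S) (hmm' : m < m') :
    ∑ t ∈ S with t < m, f t + f m ≤ ∑ t ∈ S with t < m', f t := by
  have key := sum_filter_lt_add_le (S.filter (· < m')) f (mem_filter.2 ⟨hm, hmm'⟩)
  rwa [filter_filter, filter_congr fun t _ => and_iff_right_of_imp (lt_trans · hmm')] at key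

lemma sInf_le_sInf_of_forall_exists_le {α β : Type*} {P : α → Prop} {Q : β → Prop}
    {f : α → ℕ} {g : β → ℕ} (hQ : ∃ b, Q b) (h : ∀ b, Q b → ∃ a, P a ∧ f a ≤ g b) :
    sInf {C | ∃ a, P a ∧ f a = C} ≤ sInf {C | ∃ b, Q b ∧ g b = C} := by
  obtain ⟨b₀, hb₀⟩ := hQ
  refine le_csInf ?_ ?_
  · exact ⟨g b₀, b₀, hb₀, rfl⟩
  rintro _ ⟨b, hb, rfl⟩
  obtain ⟨a, ha, hab⟩ := h b hb
  exact (Nat.sInf_le (show f a ∈ {C | ∃ a, P a ∧ f a = C} from ⟨a, ha, rfl⟩)).trans hab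

variable {L : ℕ} {X : ι → ℕ} {p : ι → ℕ → ℕ} {s : ι → ℕ}

lemma ValidInstance.le_of_le (hI : ValidInstance L X p) (i : ι) {l l' : ℕ} (hl : 1 ≤ l)
    (hll' : l ≤ l') (hl' : l' ≤ X i) : p i l ≤ p i l' :=
  (hI i).2.2.monotoneOn (Set.mem_Icc.2 ⟨hl, hll'.trans hl'⟩) (Set.mem_Icc.2 ⟨hl.trans hll', hl'⟩)
    hll'

lemma ValidInstance.eq_one_or_eq_two (hI : ValidInstance 2 X p) (i : ι) : X i = 1 ∨ X i = 2 := by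
  have := hI i
  omega

lemma Feasible.disjoint_Ico_one (hs : Feasible X p s) (hI : ValidInstance L X p) {i j : ι}
    (hij : i ≠ j) : Disjoint (Ico (s i) (s i + p i 1)) (Ico (s j) (s j + p j 1)) := by
  have hi := hI.le_of_le i le_rfl (le_min (hI i).1 (hI j).1) (min_le_left _ _)
  have hj := hI.le_of_le j le_rfl (le_min (hI i).1 (hI j).1) (min_le_right _ _)
  apply disjoint_Ico_of_le_or_le
  have := hs i j hij
  omega

end General

section Assignment

variable {n : ℕ}

def roots (a : Fin n → Option (Fin n)) : Finset (Fin n) := univ.filter fun t => a t = none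

def assignedTo (a : Fin n → Option (Fin n)) (i : Fin n) : Finset (Fin n) :=
  univ.filter fun j => a j = some i

def anchor (a : Fin n → Option (Fin n)) (k : Fin n) : Fin n := (a k).getD k

def rootLen (X : Fin n → ℕ) (p : Fin n → ℕ → ℕ) (a : Fin n → Option (Fin n)) (t : Fin n) : ℕ :=
  if X t = 2 then blockLen X p a t else p t 1

variable {X : Fin n → ℕ} {p : Fin n → ℕ → ℕ} {a : Fin n → Option (Fin n)}

@[simp] lemma mem_roots {t : Fin n} : t ∈ roots a ↔ a t = none := by simp [roots]

@[simp] lemma mem_assignedTo {i j : Fin n} : j ∈ assignedTo a i ↔ a j = some i := by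
  simp [assignedTo]

lemma anchor_of_eq_none {k : Fin n} (h : a k = none) : anchor a k = k := by simp [anchor, h]

lemma anchor_of_eq_some {k i : Fin n} (h : a k = some i) : anchor a k = i := by simp [anchor, h]

namespace ValidAssignment

lemma eq_none_of_eq_two (ha : ValidAssignment X a) {i : Fin n} (h : X i = 2) : a i = none := by
  cases hi : a i with
  | none => rfl
  | some i' => have := (ha i i' hi).1; omega

lemma anchor_mem_roots (ha : ValidAssignment X a) (k : Fin n) : anchor a k ∈ roots a := by
  cases hk : a k with
  | none => simpa [anchor_of_eq_none hk] using hk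
  | some i => simpa [anchor_of_eq_some hk] using ha.eq_none_of_eq_two (ha k i hk).2

lemma blockLen_eq (ha : ValidAssignment X a) (i : Fin n) :
    blockLen X p a i = max (p i 1 + ∑ j ∈ assignedTo a i, p j 1) (p i 2) := by
  have : univ.filter (fun j => X j = 1 ∧ a j = some i) = assignedTo a i := by
    ext j
    simpa using fun h => (ha j i h).1
  rw [blockLen, this]

lemma coverObj_eq_sum_rootLen (ha : ValidAssignment X a) (hI : ValidInstance 2 X p) :
    coverObj X p a = ∑ t ∈ roots a, rootLen X p a t := by
  simp only [rootLen, sum_ite, roots, filter_filter, coverObj]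
  congr 1 <;> refine sum_congr (filter_congr fun t _ => ?_) fun _ _ => rfl
  · exact ⟨fun h => ⟨ha.eq_none_of_eq_two h, h⟩, And.right⟩
  · have := hI.eq_one_or_eq_two t
    constructor
    · rintro ⟨h1, hn⟩; exact ⟨hn, by omega⟩
    · rintro ⟨hn, h2⟩; exact ⟨by omega, hn⟩

end ValidAssignment

end Assignment

section BlockSchedule

variable {n : ℕ} {X : Fin n → ℕ} {p : Fin n → ℕ → ℕ} {a : Fin n → Option (Fin n)}

variable (X p a) in
def blockStart (m : Fin n) : ℕ := ∑ t ∈ roots a with t < m, rootLen X p a t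

variable (p a) in
def blockOffset (k : Fin n) : ℕ :=
  match a k with
  | none => 0
  | some i => p i 1 + ∑ j ∈ assignedTo a i with j < k, p j 1

variable (X p a) in
def blockSchedule (k : Fin n) : ℕ := blockStart X p a (anchor a k) + blockOffset p a k

lemma blockOffset_add_le (hI : ValidInstance 2 X p) (ha : ValidAssignment X a) (k : Fin n) :
    blockOffset p a k + p k (X k) ≤ rootLen X p a (anchor a k) := by
  cases hk : a k with
  | none =>
    rw [anchor_of_eq_none hk, blockOffset, hk, rootLen]
    rcases hI.eq_one_or_eq_two k with h | h <;> simp [h, blockLen]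
  | some i =>
    obtain ⟨hXk, hXi⟩ := ha k i hk
    have := sum_filter_lt_add_le (assignedTo a i) (fun j => p j 1) (mem_assignedTo.2 hk)
    rw [anchor_of_eq_some hk, blockOffset, hk, rootLen, if_pos hXi, ha.blockLen_eq, hXk]
    simp only at this ⊢
    omega

lemma blockStart_add_le {m m' : Fin n} (hm : a m = none) (hmm' : m < m') :
    blockStart X p a m + rootLen X p a m ≤ blockStart X p a m' :=
  sum_filter_lt_add_le_sum_filter_lt _ _ (mem_roots.2 hm) hmm'

lemma blockSchedule_add_le_of_anchor_lt (hI : ValidInstance 2 X p) (ha : ValidAssignment X a)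
    {k k' : Fin n} (h : anchor a k < anchor a k') :
    blockSchedule X p a k + p k (X k) ≤ blockSchedule X p a k' := by
  have hk := blockOffset_add_le hI ha k
  have hstart := blockStart_add_le (X := X) (p := p) (mem_roots.1 (ha.anchor_mem_roots k)) h
  unfold blockSchedule
  omega

lemma blockSchedule_add_le_of_root {i j : Fin n} (hi : a i = none) (hj : a j = some i) :
    blockSchedule X p a i + p i 1 ≤ blockSchedule X p a j := by
  simp only [blockSchedule, blockOffset, anchor_of_eq_none hi, anchor_of_eq_some hj, hi, hj]
  omega

lemma blockSchedule_add_le_of_lt {i j j' : Fin n} (hj : a j = some i) (hj' : a j' = some i)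
    (hjj' : j < j') : blockSchedule X p a j + p j 1 ≤ blockSchedule X p a j' := by
  have := sum_filter_lt_add_le_sum_filter_lt (assignedTo a i) (fun j => p j 1)
    (mem_assignedTo.2 hj) hjj'
  simp only [blockSchedule, blockOffset, anchor_of_eq_some hj, anchor_of_eq_some hj', hj, hj']
    at this ⊢
  omega

lemma blockSchedule_sep_of_anchor_eq (ha : ValidAssignment X a) {k k' : Fin n} (hne : k ≠ k')
    (h : anchor a k = anchor a k') :
    blockSchedule X p a k + p k (min (X k) (X k')) ≤ blockSchedule X p a k' ∨
      blockSchedule X p a k' + p k' (min (X k) (X k')) ≤ blockSchedule X p a k := by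
  cases hk : a k with
  | none =>
    cases hk' : a k' with
    | none => exact absurd (by simpa [anchor_of_eq_none hk, anchor_of_eq_none hk'] using h) hne
    | some i =>
      obtain rfl : k = i := by simpa [anchor_of_eq_none hk, anchor_of_eq_some hk'] using h
      obtain ⟨hX1, hX2⟩ := ha k' k hk'
      simpa [hX1, hX2] using Or.inl (blockSchedule_add_le_of_root (X := X) (p := p) hk hk')
  | some i =>
    cases hk' : a k' with
    | none =>
      obtain rfl : i = k' := by simpa [anchor_of_eq_none hk', anchor_of_eq_some hk] using h
      obtain ⟨hX1, hX2⟩ := ha k i hk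
      simpa [hX1, hX2] using Or.inr (blockSchedule_add_le_of_root (X := X) (p := p) hk' hk)
    | some i' =>
      obtain rfl : i = i' := by simpa [anchor_of_eq_some hk, anchor_of_eq_some hk'] using h
      rw [(ha k i hk).1, (ha k' i hk').1]
      rcases hne.lt_or_gt with hlt | hlt
      · exact Or.inl (blockSchedule_add_le_of_lt hk hk' hlt)
      · exact Or.inr (blockSchedule_add_le_of_lt hk' hk hlt)

lemma blockSchedule_feasible (hI : ValidInstance 2 X p) (ha : ValidAssignment X a) :
    Feasible X p (blockSchedule X p a) := by
  intro k k' hne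
  have hmin : 1 ≤ min (X k) (X k') := le_min (hI k).1 (hI k').1
  rcases lt_trichotomy (anchor a k) (anchor a k') with h | h | h
  · have := blockSchedule_add_le_of_anchor_lt hI ha h
    have := hI.le_of_le k hmin (min_le_left _ _) le_rfl
    omega
  · exact blockSchedule_sep_of_anchor_eq ha hne h
  · have := blockSchedule_add_le_of_anchor_lt hI ha h
    have := hI.le_of_le k' hmin (min_le_right _ _) le_rfl
    omega

lemma makespan_blockSchedule_le (hI : ValidInstance 2 X p) (ha : ValidAssignment X a) :
    makespan X p (blockSchedule X p a) ≤ coverObj X p a := by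
  refine Finset.sup_le fun k _ => ?_
  have hk := blockOffset_add_le hI ha k
  have hroot := sum_filter_lt_add_le (roots a) (rootLen X p a) (ha.anchor_mem_roots k)
  rw [ha.coverObj_eq_sum_rootLen hI]
  unfold blockSchedule blockStart
  omega

end BlockSchedule

section ExtensionAssignment

variable {n : ℕ} {X : Fin n → ℕ} {p : Fin n → ℕ → ℕ} {s : Fin n → ℕ}

variable (X p s) in
def StartsInExtension (j i : Fin n) : Prop := X i = 2 ∧ s i + p i 1 ≤ s j ∧ s j < s i + p i 2

variable (X p s) in
open Classical in
noncomputable def extensionAssignment (j : Fin n) : Option (Fin n) :=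
  if h : X j = 1 ∧ ∃ i, StartsInExtension X p s j i then some h.2.choose else none

variable (X p s) in
def runInterval (k : Fin n) : Finset ℕ := Ico (s k) (s k + p k (X k))

variable (X p s) in
def blockSet (a : Fin n → Option (Fin n)) (t : Fin n) : Finset ℕ :=
  (univ.filter fun k => anchor a k = t).biUnion (runInterval X p s)

lemma StartsInExtension.unique (hs : Feasible X p s) {i i' j : Fin n}
    (h : StartsInExtension X p s j i) (h' : StartsInExtension X p s j i') : i = i' := by
  by_contra hne
  have := hs i i' hne
  rw [h.1, h'.1, min_self] at this
  unfold StartsInExtension at h h'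
  omega

lemma extensionAssignment_spec {i j : Fin n} (h : extensionAssignment X p s j = some i) :
    X j = 1 ∧ StartsInExtension X p s j i := by
  unfold extensionAssignment at h
  split_ifs at h with hj
  cases h
  exact ⟨hj.1, hj.2.choose_spec⟩

lemma extensionAssignment_eq_some (hs : Feasible X p s) {i j : Fin n} (hj : X j = 1)
    (h : StartsInExtension X p s j i) : extensionAssignment X p s j = some i := by
  have hex : X j = 1 ∧ ∃ i, StartsInExtension X p s j i := ⟨hj, i, h⟩
  rw [extensionAssignment, dif_pos hex, (hex.2.choose_spec.unique hs h)]

lemma extensionAssignment_valid : ValidAssignment X (extensionAssignment X p s) :=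
  fun _ _ h => ⟨(extensionAssignment_spec h).1, (extensionAssignment_spec h).2.1⟩

lemma disjoint_runInterval_of_ne_some (hs : Feasible X p s) {k k' : Fin n} (hk : X k = 2)
    (hk' : X k' = 1) (h : extensionAssignment X p s k' ≠ some k) :
    Disjoint (runInterval X p s k) (runInterval X p s k') := by
  have hne : k ≠ k' := by rintro rfl; omega
  have hsep := hs k k' hne
  rw [hk, hk', show min 2 1 = 1 from rfl] at hsep
  unfold runInterval
  rw [hk, hk']
  apply disjoint_Ico_of_le_or_le
  by_cases hext : StartsInExtension X p s k' k
  · exact absurd (extensionAssignment_eq_some hs hk' hext) h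
  · unfold StartsInExtension at hext
    omega

lemma disjoint_runInterval_of_anchor_ne (hI : ValidInstance 2 X p) (hs : Feasible X p s)
    {k k' : Fin n}
    (h : anchor (extensionAssignment X p s) k ≠ anchor (extensionAssignment X p s) k') :
    Disjoint (runInterval X p s k) (runInterval X p s k') := by
  have ha : ValidAssignment X (extensionAssignment X p s) := extensionAssignment_valid
  have hne : k ≠ k' := by rintro rfl; exact h rfl
  rcases hI.eq_one_or_eq_two k with hk | hk <;> rcases hI.eq_one_or_eq_two k' with hk' | hk'
  · simpa only [runInterval, hk, hk'] using hs.disjoint_Ico_one hI hne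
  · exact (disjoint_runInterval_of_ne_some hs hk' hk fun h' =>
      h (by rw [anchor_of_eq_some h', anchor_of_eq_none (ha.eq_none_of_eq_two hk')])).symm
  · exact disjoint_runInterval_of_ne_some hs hk hk' fun h' =>
      h (by rw [anchor_of_eq_some h', anchor_of_eq_none (ha.eq_none_of_eq_two hk)])
  · have hsep := hs k k' hne
    rw [hk, hk', min_self] at hsep
    simpa only [runInterval, hk, hk'] using disjoint_Ico_of_le_or_le hsep

lemma Feasible.card_biUnion_Ico_one {L : ℕ} (hs : Feasible X p s) (hI : ValidInstance L X p)
    (S : Finset (Fin n)) :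
    (S.biUnion fun k => Ico (s k) (s k + p k 1)).card = ∑ k ∈ S, p k 1 := by
  rw [card_biUnion fun k _ k' _ hne => hs.disjoint_Ico_one hI hne]
  exact sum_congr rfl fun k _ => by simp

lemma rootLen_le_card_blockSet (hI : ValidInstance 2 X p) (hs : Feasible X p s) {t : Fin n}
    (ht : extensionAssignment X p s t = none) :
    rootLen X p (extensionAssignment X p s) t ≤
      (blockSet X p s (extensionAssignment X p s) t).card := by
  set a := extensionAssignment X p s
  have hrun : runInterval X p s t ⊆ blockSet X p s a t :=
    subset_biUnion_of_mem _ (by simpa using anchor_of_eq_none ht)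
  have hrun_card := card_le_card hrun
  simp only [runInterval, Nat.card_Ico, add_tsub_cancel_left] at hrun_card
  rcases hI.eq_one_or_eq_two t with h1 | h2
  · rwa [rootLen, if_neg (by omega), ← h1]
  rw [rootLen, if_pos h2, extensionAssignment_valid.blockLen_eq, ← h2]
  refine max_le ?_ hrun_card
  have hlevel : (insert t (assignedTo a t)).biUnion (fun k => Ico (s k) (s k + p k 1)) ⊆
      blockSet X p s a t := by
    refine biUnion_subset.2 fun k hk => ?_
    have hanchor : anchor a k = t := by
      rcases mem_insert.1 hk with rfl | hk
      · exact anchor_of_eq_none ht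
      · exact anchor_of_eq_some (mem_assignedTo.1 hk)
    refine (Ico_subset_Ico_right ?_).trans (subset_biUnion_of_mem (runInterval X p s) ?_)
    · exact Nat.add_le_add_left (hI.le_of_le k le_rfl (hI k).1 le_rfl) _
    · simpa using hanchor
  have ht_notMem : t ∉ assignedTo a t := by simp [ht]
  have := card_le_card hlevel
  rwa [hs.card_biUnion_Ico_one hI, sum_insert ht_notMem] at this

lemma runInterval_subset_range_makespan (k : Fin n) :
    runInterval X p s k ⊆ range (makespan X p s) := by
  intro x hx
  have := le_sup (f := fun i => s i + p i (X i)) (mem_univ k)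
  rw [runInterval, mem_Ico] at hx
  rw [mem_range, makespan]
  omega

lemma coverObj_extensionAssignment_le (hI : ValidInstance 2 X p) (hs : Feasible X p s) :
    coverObj X p (extensionAssignment X p s) ≤ makespan X p s := by
  set a := extensionAssignment X p s
  have hdisj : (roots a : Set (Fin n)).PairwiseDisjoint (blockSet X p s a) := by
    intro t _ t' _ htt'
    simp only [Function.onFun, blockSet, disjoint_biUnion_left, disjoint_biUnion_right,
      mem_filter, mem_univ, true_and]
    rintro k rfl k' rfl
    exact disjoint_runInterval_of_anchor_ne hI hs htt'
  calc coverObj X p a = ∑ t ∈ roots a, rootLen X p a t :=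
        extensionAssignment_valid.coverObj_eq_sum_rootLen hI
    _ ≤ ∑ t ∈ roots a, (blockSet X p s a t).card :=
        sum_le_sum fun t ht => rootLen_le_card_blockSet hI hs (mem_roots.1 ht)
    _ = ((roots a).biUnion (blockSet X p s a)).card := (card_biUnion hdisj).symm
    _ ≤ (range (makespan X p s)).card :=
        card_le_card (biUnion_subset.2 fun _ _ => biUnion_subset.2 fun k _ =>
          runInterval_subset_range_makespan k)
    _ = makespan X p s := card_range _

end ExtensionAssignment

/-- for the two-level problem, the optimal makespan equals the
minimum of the covering objective over all assignments of Lo-tasks to Hi-tasks. -/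
theorem stmt6 (n : ℕ) (X : Fin n → ℕ) (p : Fin n → ℕ → ℕ)
    (hI : ValidInstance 2 X p) :
    sInf {C | ∃ s, Feasible X p s ∧ makespan X p s = C} =
      sInf {C | ∃ a, ValidAssignment X a ∧ coverObj X p a = C} := by
  have hnone : ValidAssignment X fun _ => none := fun _ _ h => by simp at h
  apply le_antisymm
  · exact sInf_le_sInf_of_forall_exists_le ⟨_, hnone⟩ fun a ha =>
      ⟨_, blockSchedule_feasible hI ha, makespan_blockSchedule_le hI ha⟩
  · exact sInf_le_sInf_of_forall_exists_le ⟨_, blockSchedule_feasible hI hnone⟩ fun s hs =>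
      ⟨_, extensionAssignment_valid, coverObj_extensionAssignment_le hI hs⟩
end

section
/- For any instance of the L-level problem, OPT(I) ≤ Σ_{ℓ=1}^{L} Σ_{i: X_i = ℓ} p_i^(ℓ) ≤ L · max_ℓ Σ_{i: X_i ≥ ℓ} p_i^(ℓ) ≤ L · OPT(I); that is, the LCF value is sandwiched between OPT and L·OPT. -/
/-- Pairwise separated intervals all contained in `[0, M]` have total length `≤ M`. -/
lemma interval_sum_le {ι : Type*} [DecidableEq ι] (T : Finset ι) (s q : ι → ℕ) :
    ∀ M : ℕ, (∀ i ∈ T, ∀ j ∈ T, i ≠ j → s i + q i ≤ s j ∨ s j + q j ≤ s i) →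
      (∀ i ∈ T, s i + q i ≤ M) → ∑ i ∈ T, q i ≤ M := by
  induction T using Finset.strongInduction with
  | _ T ih =>
    intro M hsep hM
    rcases T.eq_empty_or_nonempty with rfl | hT
    · simp
    · obtain ⟨i, hi, hmax⟩ := T.exists_max_image (fun j => s j * (M + 1) + q j) hT
      have hqi : q i ≤ M := le_trans (Nat.le_add_left _ _) (hM i hi)
      have hkey : ∀ j ∈ T.erase i, s j + q j ≤ s i := by
        intro j hj
        have hjT : j ∈ T := Finset.mem_of_mem_erase hj
        have hne : i ≠ j := fun h => (Finset.ne_of_mem_erase hj) h.symm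
        rcases hsep i hi j hjT hne with h | h
        · -- s i + q i ≤ s j
          have hab : s i ≤ s j := le_trans (Nat.le_add_right _ _) h
          have hmj := hmax j hjT
          rcases eq_or_lt_of_le hab with heq | hlt
          · rw [← heq] at hmj h
            have hqj : q j ≤ q i := Nat.le_of_add_le_add_left hmj
            omega
          · have h1 : s i * (M + 1) + (M + 1) ≤ s j * (M + 1) := by
              calc s i * (M + 1) + (M + 1) = (s i + 1) * (M + 1) := by ring
                _ ≤ s j * (M + 1) := Nat.mul_le_mul_right _ hlt
            have h2 : s i * (M + 1) + (M + 1) ≤ s i * (M + 1) + M :=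
              le_trans h1 (le_trans (Nat.le_add_right _ _)
                (le_trans hmj (Nat.add_le_add_left hqi _)))
            exact absurd (Nat.le_of_add_le_add_left h2) (by omega)
        · exact h
      have hrec : ∑ j ∈ T.erase i, q j ≤ s i :=
        ih (T.erase i) (Finset.erase_ssubset hi) (s i)
          (fun a ha b hb hab =>
            hsep a (Finset.mem_of_mem_erase ha) b (Finset.mem_of_mem_erase hb) hab)
          hkey
      have hsum : q i + ∑ j ∈ T.erase i, q j = ∑ j ∈ T, q j :=
        Finset.add_sum_erase T q hi
      have := hM i hi
      omega

/-- The naive sequential schedule. -/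
def seqSched {n : ℕ} (X : Fin n → ℕ) (p : Fin n → ℕ → ℕ) (i : Fin n) : ℕ :=
  ∑ j ∈ Finset.univ.filter (fun j => j < i), p j (X j)

/-- OPT(I) ≤ LCF value ≤ L · max_ℓ Σ_{X_i ≥ ℓ} p_i^(ℓ) ≤ L · OPT(I). -/
theorem stmt16 (n L : ℕ) (X : Fin n → ℕ) (p : Fin n → ℕ → ℕ)
    (hI : ValidInstance L X p) :
    sInf {C | ∃ s, Feasible X p s ∧ makespan X p s = C} ≤
        (∑ ℓ ∈ Finset.Icc 1 L, ∑ i ∈ Finset.univ.filter fun i => X i = ℓ, p i ℓ) ∧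
      (∑ ℓ ∈ Finset.Icc 1 L, ∑ i ∈ Finset.univ.filter fun i => X i = ℓ, p i ℓ) ≤
        L * (Finset.Icc 1 L).sup
          (fun ℓ => ∑ i ∈ Finset.univ.filter fun i => ℓ ≤ X i, p i ℓ) ∧
      L * (Finset.Icc 1 L).sup
          (fun ℓ => ∑ i ∈ Finset.univ.filter fun i => ℓ ≤ X i, p i ℓ) ≤
        L * sInf {C | ∃ s, Feasible X p s ∧ makespan X p s = C} := by
  -- monotonicity of processing times up to the criticality level
  have hp : ∀ i : Fin n, ∀ ℓ m : ℕ, 1 ≤ ℓ → ℓ ≤ m → m ≤ X i → p i ℓ ≤ p i m := by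
    intro i ℓ m h1 h2 h3
    exact (hI i).2.2.monotoneOn ⟨h1, le_trans h2 h3⟩ ⟨le_trans h1 h2, h3⟩ h2
  -- the sequential schedule is ordered
  have hmono : ∀ i j : Fin n, i < j → seqSched X p i + p i (X i) ≤ seqSched X p j := by
    intro i j hij
    have hsub : insert i (Finset.univ.filter (fun k => k < i)) ⊆
        Finset.univ.filter (fun k => k < j) := by
      intro k hk
      simp only [Finset.mem_insert, Finset.mem_filter, Finset.mem_univ, true_and] at *
      rcases hk with rfl | h
      · exact hij
      · exact lt_trans h hij
    have hsum := Finset.sum_le_sum_of_subset (f := fun k => p k (X k)) hsub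
    simpa [seqSched, add_comm] using hsum
  -- feasibility of the sequential schedule
  have hfeas : Feasible X p (seqSched X p) := by
    intro i j hij
    have hmin : ∀ a b : Fin n, p a (min (X a) (X b)) ≤ p a (X a) :=
      fun a b => hp a _ _ (le_min (hI a).1 (hI b).1) (min_le_left _ _) le_rfl
    rcases lt_or_gt_of_ne hij with h | h
    · left; exact le_trans (Nat.add_le_add_left (hmin i j) _) (hmono i j h)
    · right
      have := hmono j i h
      have := hmin j i
      rw [min_comm] at this
      omega
  -- makespan of the sequential schedule is at most the total sum
  have hmk : makespan X p (seqSched X p) ≤ ∑ i, p i (X i) := by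
    apply Finset.sup_le
    intro i _
    have hsub : insert i (Finset.univ.filter (fun k => k < i)) ⊆ Finset.univ := by
      intro k _; exact Finset.mem_univ k
    have hsum := Finset.sum_le_sum_of_subset (f := fun k => p k (X k)) hsub
    simpa [seqSched, add_comm] using hsum
  -- the LCF value equals the total sum
  have hLCF : (∑ ℓ ∈ Finset.Icc 1 L, ∑ i ∈ Finset.univ.filter fun i => X i = ℓ, p i ℓ)
      = ∑ i, p i (X i) := by
    rw [← Finset.sum_fiberwise_of_maps_to (g := X) (t := Finset.Icc 1 L)
      (fun i _ => Finset.mem_Icc.mpr ⟨(hI i).1, (hI i).2.1⟩) (fun i => p i (X i))]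
    refine Finset.sum_congr rfl fun ℓ _ => Finset.sum_congr rfl fun i hi => ?_
    have : X i = ℓ := (Finset.mem_filter.mp hi).2
    rw [this]
  set S := {C | ∃ s, Feasible X p s ∧ makespan X p s = C} with hS
  have hmem : makespan X p (seqSched X p) ∈ S := ⟨seqSched X p, hfeas, rfl⟩
  refine ⟨?_, ?_, ?_⟩
  · -- OPT ≤ LCF
    rw [hLCF]
    exact le_trans (Nat.sInf_le hmem) hmk
  · -- LCF ≤ L * sup
    calc (∑ ℓ ∈ Finset.Icc 1 L, ∑ i ∈ Finset.univ.filter fun i => X i = ℓ, p i ℓ)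
        ≤ ∑ ℓ ∈ Finset.Icc 1 L, (Finset.Icc 1 L).sup
            (fun ℓ => ∑ i ∈ Finset.univ.filter fun i => ℓ ≤ X i, p i ℓ) := by
          refine Finset.sum_le_sum fun ℓ hℓ => ?_
          refine le_trans ?_ (Finset.le_sup hℓ)
          refine Finset.sum_le_sum_of_subset fun i hi => ?_
          simp only [Finset.mem_filter, Finset.mem_univ, true_and] at *
          omega
      _ = L * (Finset.Icc 1 L).sup
            (fun ℓ => ∑ i ∈ Finset.univ.filter fun i => ℓ ≤ X i, p i ℓ) := by
          simp [Finset.sum_const, Nat.card_Icc, mul_comm]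
  · -- L * sup ≤ L * OPT
    refine Nat.mul_le_mul_left L ?_
    obtain ⟨t, htf, htm⟩ := Nat.sInf_mem (⟨_, hmem⟩ : S.Nonempty)
    refine Finset.sup_le fun ℓ hℓ => ?_
    obtain ⟨hℓ1, hℓL⟩ := Finset.mem_Icc.mp hℓ
    rw [← htm]
    refine interval_sum_le _ t (fun i => p i ℓ) (makespan X p t) ?_ ?_
    · intro i hi j hj hij
      have hiX : ℓ ≤ X i := (Finset.mem_filter.mp hi).2
      have hjX : ℓ ≤ X j := (Finset.mem_filter.mp hj).2
      have hpi : p i ℓ ≤ p i (min (X i) (X j)) :=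
        hp i _ _ hℓ1 (le_min hiX hjX) (min_le_left _ _)
      have hpj : p j ℓ ≤ p j (min (X i) (X j)) :=
        hp j _ _ hℓ1 (le_min hiX hjX) (min_le_right _ _)
      rcases htf i j hij with h | h
      · left; exact le_trans (Nat.add_le_add_left hpi _) h
      · right; exact le_trans (Nat.add_le_add_left hpj _) h
    · intro i hi
      have hiX : ℓ ≤ X i := (Finset.mem_filter.mp hi).2
      have h1 : p i ℓ ≤ p i (X i) := hp i _ _ hℓ1 hiX le_rfl
      have h2 : t i + p i (X i) ≤ makespan X p t :=
        Finset.le_sup (f := fun i => t i + p i (X i)) (Finset.mem_univ i)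
      exact le_trans (Nat.add_le_add_left h1 _) h2
end

section
/- In the two-level problem, there always exists an optimal schedule in which all Hi-tasks appear in an arbitrary prescribed order; i.e., for any permutation σ of the Hi-tasks there is an optimal feasible schedule whose Hi-tasks start in the order given by σ. -/
lemma makespan_def {ι : Type*} [Fintype ι] (X : ι → ℕ) (p : ι → ℕ → ℕ) (s : ι → ℕ) :
    makespan X p s = Finset.univ.sup fun i => s i + p i (X i) := rfl

/-- Transformation: any feasible schedule can be rearranged so that Hi-tasks
start in the order prescribed by σ, without increasing the makespan. -/
lemma exists_reorder (n : ℕ) (X : Fin n → ℕ) (p : Fin n → ℕ → ℕ)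
    (hI : ValidInstance 2 X p) (σ : Equiv.Perm (Fin n)) (s : Fin n → ℕ)
    (hs : Feasible X p s) :
    ∃ s', Feasible X p s' ∧ makespan X p s' ≤ makespan X p s ∧
      ∀ i j, X i = 2 → X j = 2 → σ i < σ j → s' i ≤ s' j := by
  classical
  have hX1 : ∀ i, 1 ≤ X i := fun i => (hI i).1
  have hX2 : ∀ i, X i = 1 ∨ X i = 2 := by
    intro i; have := (hI i).1; have := (hI i).2.1; omega
  have hmono : ∀ i a b, 1 ≤ a → a ≤ b → b ≤ X i → p i a ≤ p i b := by
    intro i a b h1 hab hb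
    exact (hI i).2.2.monotoneOn ⟨h1, le_trans hab hb⟩ ⟨le_trans h1 hab, hb⟩ hab
  have hminX : ∀ i j, p i (min (X i) (X j)) ≤ p i (X i) := fun i j =>
    hmono i _ _ (le_min (hX1 i) (hX1 j)) (min_le_left _ _) (le_refl _)
  have hminX' : ∀ i j, p j (min (X i) (X j)) ≤ p j (X j) := by
    intro i j; rw [min_comm]; exact hminX j i
  have h1min : ∀ i j, p i 1 ≤ p i (min (X i) (X j)) := fun i j =>
    hmono i 1 _ le_rfl (le_min (hX1 i) (hX1 j)) (min_le_left _ _)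
  have h1min' : ∀ i j, p j 1 ≤ p j (min (X i) (X j)) := by
    intro i j; rw [min_comm]; exact h1min j i
  have hlow : ∀ i j, i ≠ j → s i + p i 1 ≤ s j ∨ s j + p j 1 ≤ s i := by
    intro i j hij
    rcases hs i j hij with h | h
    · left; have := h1min i j; omega
    · right; have := h1min' i j; omega
  have hfull : ∀ i j, X i = 2 → X j = 2 → i ≠ j →
      s i + p i 2 ≤ s j ∨ s j + p j 2 ≤ s i := by
    intro i j hi hj hij
    have := hs i j hij
    rw [hi, hj] at this; simpa using this
  have hpos : ∀ i, X i = 2 → 1 ≤ p i 2 := by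
    intro i hi
    have h := (hI i).2.2 (show (1:ℕ) ∈ Set.Icc 1 (X i) by rw [Set.mem_Icc]; omega)
      (show (2:ℕ) ∈ Set.Icc 1 (X i) by rw [Set.mem_Icc]; omega) one_lt_two
    omega
  set H : Finset (Fin n) := Finset.univ.filter (fun h => X h = 2) with hHdef
  have hHmem : ∀ h, h ∈ H ↔ X h = 2 := by intro h; simp [hHdef]
  by_cases hH : H.Nonempty
  swap
  · refine ⟨s, hs, le_rfl, fun i j hi hj _ => absurd ((hHmem i).mpr hi) ?_⟩
    rw [Finset.not_nonempty_iff_eq_empty.mp hH]; simp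
  have hdist : ∀ h h', h ∈ H → h' ∈ H → h ≠ h' → s h ≠ s h' := by
    intro h h' hh hh' hne heq
    rcases hfull h h' ((hHmem h).mp hh) ((hHmem h').mp hh') hne with hc | hc
    · have := hpos h ((hHmem h).mp hh); omega
    · have := hpos h' ((hHmem h').mp hh'); omega
  -- the "leader" of each grouped task: the Hi-task with the largest start ≤ its start
  have hex : ∀ i, ∃ h, (∃ h' ∈ H, s h' ≤ s i) →
      (h ∈ H ∧ s h ≤ s i ∧ ∀ h' ∈ H, s h' ≤ s i → s h' ≤ s h) := by
    intro i
    by_cases hg : ∃ h' ∈ H, s h' ≤ s i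
    · obtain ⟨h0, h0H, h0le⟩ := hg
      obtain ⟨h, hmem, hmax⟩ := Finset.exists_max_image (H.filter fun h => s h ≤ s i) s
        ⟨h0, Finset.mem_filter.mpr ⟨h0H, h0le⟩⟩
      rw [Finset.mem_filter] at hmem
      exact ⟨h, fun _ => ⟨hmem.1, hmem.2,
        fun h' hh' hle => hmax h' (Finset.mem_filter.mpr ⟨hh', hle⟩)⟩⟩
    · exact ⟨i, fun hg' => absurd hg' hg⟩
  choose ld hld using hex
  set t0 : ℕ := H.inf' hH s with ht0def
  set E : Fin n → ℕ :=
    fun h => (Finset.univ.filter (fun i => (∃ h' ∈ H, s h' ≤ s i) ∧ ld i = h)).sup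
      (fun i => s i + p i (X i)) with hEdef
  set np : Fin n → ℕ :=
    fun h => t0 + ∑ h' ∈ H.filter (fun h' => σ h' < σ h), (E h' - s h') with hnpdef
  set s' : Fin n → ℕ :=
    fun i => if (∃ h' ∈ H, s h' ≤ s i) then np (ld i) + (s i - s (ld i)) else s i with hs'def
  have hldself : ∀ h ∈ H, ld h = h := by
    intro h hh
    have hg : ∃ h' ∈ H, s h' ≤ s h := ⟨h, hh, le_rfl⟩
    obtain ⟨hH', hle, hmax⟩ := hld h hg
    by_contra hne
    exact hdist (ld h) h hH' hh hne (le_antisymm hle (hmax h hh le_rfl))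
  have hmemE : ∀ i, (∃ h' ∈ H, s h' ≤ s i) → s i + p i (X i) ≤ E (ld i) := by
    intro i hg
    rw [hEdef]
    exact Finset.le_sup (f := fun i => s i + p i (X i))
      (Finset.mem_filter.mpr ⟨Finset.mem_univ i, hg, rfl⟩)
  have hsep : ∀ i, (∃ h' ∈ H, s h' ≤ s i) → ∀ h' ∈ H, s (ld i) < s h' →
      s i + p i (X i) ≤ s h' := by
    intro i hg h' hh' hlt
    obtain ⟨hiH, hle, hmax⟩ := hld i hg
    have hsi : s i < s h' := by
      by_contra hcon
      push_neg at hcon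
      have := hmax h' hh' hcon; omega
    have hne : i ≠ h' := fun e => by rw [e] at hsi; omega
    rcases hX2 i with hXi | hXi
    · rcases hlow i h' hne with hc | hc
      · rwa [hXi]
      · omega
    · rcases hfull i h' hXi ((hHmem h').mp hh') hne with hc | hc
      · rwa [hXi]
      · omega
  have hEle : ∀ h, E h ≤ makespan X p s := by
    intro h
    rw [hEdef, makespan_def]
    exact Finset.sup_le fun i _ =>
      Finset.le_sup (f := fun i => s i + p i (X i)) (Finset.mem_univ i)
  have hEsep : ∀ h ∈ H, ∀ h' ∈ H, s h < s h' → E h ≤ s h' := by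
    intro h hh h' hh' hlt
    rw [hEdef]
    apply Finset.sup_le
    intro i hi
    rw [Finset.mem_filter] at hi
    exact hsep i hi.2.1 h' hh' (by rw [hi.2.2]; exact hlt)
  have hsE : ∀ h ∈ H, s h + p h (X h) ≤ E h := by
    intro h hh
    have := hmemE h ⟨h, hh, le_rfl⟩
    rwa [hldself h hh] at this
  have hung : ∀ i, ¬ (∃ h' ∈ H, s h' ≤ s i) → ∀ h ∈ H, s i + p i (X i) ≤ s h := by
    intro i hng h hh
    have hlt : s i < s h := by
      by_contra hc; push_neg at hc; exact hng ⟨h, hh, hc⟩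
    have hne : i ≠ h := fun e => by rw [e] at hlt; omega
    rcases hX2 i with hXi | hXi
    · rcases hlow i h hne with hc | hc
      · rwa [hXi]
      · omega
    · exact absurd ⟨i, (hHmem i).mpr hXi, le_rfl⟩ hng
  have ht0le : ∀ h ∈ H, t0 ≤ s h := fun h hh => Finset.inf'_le s hh
  have hungt0 : ∀ i, ¬ (∃ h' ∈ H, s h' ≤ s i) → s i + p i (X i) ≤ t0 :=
    fun i hng => Finset.le_inf' hH s (fun h hh => hung i hng h hh)
  have ht0np : ∀ h, t0 ≤ np h := by
    intro h; rw [hnpdef]; exact Nat.le_add_right _ _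
  -- key telescoping bound
  have hkey : ∀ G : Finset (Fin n), G ⊆ H → ∀ B c, (∀ h ∈ G, E h ≤ B) →
      (∀ h ∈ G, c ≤ s h) → G.Nonempty → c + ∑ h ∈ G, (E h - s h) ≤ B := by
    intro G
    induction G using Finset.strongInduction with
    | _ G IH =>
      intro hGH B c hEB hcs hGne
      obtain ⟨hm, hmmem, hmmax⟩ := Finset.exists_max_image G s hGne
      have hmH : hm ∈ H := hGH hmmem
      have hsEm : s hm ≤ E hm := le_trans (Nat.le_add_right _ _) (hsE hm hmH)
      have hsum : ∑ h ∈ G.erase hm, (E h - s h) + (E hm - s hm) = ∑ h ∈ G, (E h - s h) :=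
        Finset.sum_erase_add G _ hmmem
      have hbound : c + ∑ h ∈ G.erase hm, (E h - s h) ≤ s hm := by
        by_cases hne : (G.erase hm).Nonempty
        · refine IH (G.erase hm) (Finset.erase_ssubset hmmem) (fun x hx => hGH (Finset.mem_of_mem_erase hx))
            (s hm) c ?_ (fun h hh => hcs h (Finset.mem_of_mem_erase hh)) hne
          intro h hh
          have hhG := Finset.mem_of_mem_erase hh
          have hhne := Finset.ne_of_mem_erase hh
          have hsle := hmmax h hhG
          have hslt : s h < s hm :=
            lt_of_le_of_ne hsle (hdist h hm (hGH hhG) hmH hhne)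
          exact hEsep h (hGH hhG) hm hmH hslt
        · rw [Finset.not_nonempty_iff_eq_empty.mp hne]
          simpa using hcs hm hmmem
      have := hEB hm hmmem
      omega
  -- ordering of new positions
  have hnp_add : ∀ g ∈ H, ∀ h ∈ H, σ g < σ h → np g + (E g - s g) ≤ np h := by
    intro g hg h hh hσ
    have hgne : g ∉ H.filter (fun h' => σ h' < σ g) := by simp
    have hsub : insert g (H.filter fun h' => σ h' < σ g) ⊆ H.filter (fun h' => σ h' < σ h) := by
      intro x hx
      rcases Finset.mem_insert.mp hx with rfl | hx
      · exact Finset.mem_filter.mpr ⟨hg, hσ⟩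
      · rw [Finset.mem_filter] at hx ⊢; exact ⟨hx.1, lt_trans hx.2 hσ⟩
    have hsum : ∑ h' ∈ insert g (H.filter fun h' => σ h' < σ g), (E h' - s h') ≤
        ∑ h' ∈ H.filter (fun h' => σ h' < σ h), (E h' - s h') :=
      Finset.sum_le_sum_of_subset hsub
    rw [Finset.sum_insert hgne] at hsum
    simp only [hnpdef]
    omega
  have hnpM : ∀ h ∈ H, np h + (E h - s h) ≤ makespan X p s := by
    intro h hh
    have hgne : h ∉ H.filter (fun h' => σ h' < σ h) := by simp
    have hsub : insert h (H.filter fun h' => σ h' < σ h) ⊆ H := by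
      intro x hx
      rcases Finset.mem_insert.mp hx with rfl | hx
      · exact hh
      · exact (Finset.mem_filter.mp hx).1
    have hk := hkey (insert h (H.filter fun h' => σ h' < σ h)) hsub (makespan X p s) t0
      (fun h' _ => hEle h') (fun h' hh' => ht0le h' (hsub hh'))
      ⟨h, Finset.mem_insert_self _ _⟩
    rw [Finset.sum_insert hgne] at hk
    simp only [hnpdef]
    omega
  have hs'grp : ∀ i, (∃ h' ∈ H, s h' ≤ s i) → s' i = np (ld i) + (s i - s (ld i)) := by
    intro i hg; rw [hs'def]; simp only [if_pos hg]
  have hs'ung : ∀ i, ¬ (∃ h' ∈ H, s h' ≤ s i) → s' i = s i := by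
    intro i hg; rw [hs'def]; simp only [if_neg hg]
  refine ⟨s', ?_, ?_, ?_⟩
  · -- feasibility
    intro i j hij
    by_cases hgi : (∃ h' ∈ H, s h' ≤ s i) <;> by_cases hgj : (∃ h' ∈ H, s h' ≤ s j)
    · by_cases hldeq : ld i = ld j
      · -- same group: uniform shift
        have hile := (hld i hgi).2.1
        have hjle := (hld j hgj).2.1
        rw [hldeq] at hile
        rcases hs i j hij with hc | hc
        · left; rw [hs'grp i hgi, hs'grp j hgj, hldeq]; omega
        · right; rw [hs'grp i hgi, hs'grp j hgj, hldeq]; omega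
      · -- different groups
        have hgH := (hld i hgi).1
        have hhH := (hld j hgj).1
        have hσne : σ (ld i) ≠ σ (ld j) := fun e => hldeq (σ.injective e)
        rcases lt_or_gt_of_ne hσne with hσ | hσ
        · left
          have h1 := hmemE i hgi
          have h2 := (hld i hgi).2.1
          have h3 := hnp_add _ hgH _ hhH hσ
          have h4 := hminX i j
          rw [hs'grp i hgi, hs'grp j hgj]
          omega
        · right
          have h1 := hmemE j hgj
          have h2 := (hld j hgj).2.1
          have h3 := hnp_add _ hhH _ hgH hσ
          have h4 := hminX' i j
          rw [hs'grp i hgi, hs'grp j hgj]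
          omega
    · -- i grouped, j ungrouped
      right
      have h1 := hungt0 j hgj
      have h2 := hminX' i j
      have h3 := ht0np (ld i)
      rw [hs'grp i hgi, hs'ung j hgj]
      omega
    · -- j grouped, i ungrouped
      left
      have h1 := hungt0 i hgi
      have h2 := hminX i j
      have h3 := ht0np (ld j)
      rw [hs'grp j hgj, hs'ung i hgi]
      omega
    · rw [hs'ung i hgi, hs'ung j hgj]
      exact hs i j hij
  · -- makespan bound
    rw [makespan_def]
    apply Finset.sup_le
    intro i _
    by_cases hg : (∃ h' ∈ H, s h' ≤ s i)
    · rw [hs'grp i hg]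
      have h1 := hmemE i hg
      have h2 := (hld i hg).2.1
      have h3 := hnpM (ld i) (hld i hg).1
      omega
    · rw [hs'ung i hg, makespan_def]
      exact Finset.le_sup (f := fun i => s i + p i (X i)) (Finset.mem_univ i)
  · -- prescribed order
    intro i j hi hj hσ
    have hiH := (hHmem i).mpr hi
    have hjH := (hHmem j).mpr hj
    have hgi : (∃ h' ∈ H, s h' ≤ s i) := ⟨i, hiH, le_rfl⟩
    have hgj : (∃ h' ∈ H, s h' ≤ s j) := ⟨j, hjH, le_rfl⟩
    have h3 := hnp_add i hiH j hjH hσ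
    rw [hs'grp i hgi, hs'grp j hgj, hldself i hiH, hldself j hjH]
    omega

/-- for any prescribed order of the Hi-tasks there exists an
optimal feasible schedule whose Hi-tasks start in that order. -/
theorem stmt17 (n : ℕ) (X : Fin n → ℕ) (p : Fin n → ℕ → ℕ)
    (hI : ValidInstance 2 X p) (σ : Equiv.Perm (Fin n)) :
    ∃ s, Feasible X p s ∧
      (∀ s', Feasible X p s' → makespan X p s ≤ makespan X p s') ∧
      ∀ i j, X i = 2 → X j = 2 → σ i < σ j → s i ≤ s j := by
  classical
  have hX1 : ∀ i, 1 ≤ X i := fun i => (hI i).1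
  have hmono : ∀ i a b, 1 ≤ a → a ≤ b → b ≤ X i → p i a ≤ p i b := by
    intro i a b h1 hab hb
    exact (hI i).2.2.monotoneOn ⟨h1, le_trans hab hb⟩ ⟨le_trans h1 hab, hb⟩ hab
  have hminX : ∀ i j, p i (min (X i) (X j)) ≤ p i (X i) := fun i j =>
    hmono i _ _ (le_min (hX1 i) (hX1 j)) (min_le_left _ _) (le_refl _)
  -- a (sequential) feasible schedule exists
  set s0 : Fin n → ℕ := fun i => ∑ j ∈ Finset.univ.filter (fun j => j < i), p j (X j) with hs0
  have hseq : ∀ i j : Fin n, i < j → s0 i + p i (X i) ≤ s0 j := by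
    intro i j hij
    have hine : i ∉ Finset.univ.filter (fun k => k < i) := by simp
    have hsub : insert i (Finset.univ.filter (fun k => k < i)) ⊆
        Finset.univ.filter (fun k => k < j) := by
      intro x hx
      rcases Finset.mem_insert.mp hx with rfl | hx
      · simp [hij]
      · rw [Finset.mem_filter] at hx ⊢
        exact ⟨hx.1, lt_trans hx.2 hij⟩
    have hsum : ∑ k ∈ insert i (Finset.univ.filter (fun k => k < i)), p k (X k) ≤
        ∑ k ∈ Finset.univ.filter (fun k => k < j), p k (X k) :=
      Finset.sum_le_sum_of_subset hsub
    rw [Finset.sum_insert hine] at hsum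
    simp only [hs0]
    omega
  have hfeas0 : Feasible X p s0 := by
    intro i j hij
    rcases lt_or_gt_of_ne hij with h | h
    · left
      have := hminX i j
      have := hseq i j h
      omega
    · right
      have h1 : p j (min (X i) (X j)) ≤ p j (X j) := by
        rw [min_comm]; exact hminX j i
      have := hseq j i h
      omega
  have hPex : ∃ M, ∃ t, Feasible X p t ∧ makespan X p t = M :=
    ⟨makespan X p s0, s0, hfeas0, rfl⟩
  obtain ⟨t, ht, htM⟩ := Nat.find_spec hPex
  obtain ⟨s', h1, h2, h3⟩ := exists_reorder n X p hI σ t ht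
  refine ⟨s', h1, fun t' ht' => ?_, h3⟩
  have hle : Nat.find hPex ≤ makespan X p t' := Nat.find_min' hPex ⟨t', ht', rfl⟩
  omega
end
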